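/- Let f(q) = ∑_{n=0}^∞ q^n a_n be a quaternionic power series with real coefficients converging on B(0;1), and suppose that for some imaginary unit I one has Re[f'(q)] > 0 for all q ∈ B(0;1) ∩ ℂ_I. Then Re[f'(q)] > 0 for all q ∈ B(0;1), and f is injective on B(0;1). -/

import Mathlib

/-!
Every quaternion is `x + yJ` with `J² = -1` and `y ≥ 0`, and `x + iy ↦ x + yJ` is an isometric
`ℝ`-algebra embedding `ℂ → ℍ`. Because the coefficients are real, `f` and `f'` commute with these
embeddings, so on each slice they are copies of the complex series `F z = ∑ zⁿ aₙ` and `F'`;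
in particular `Re f'(x + yJ) = Re F'(x + iy) = Re f'(x + yI) > 0`.

`F` is injective on the disc since `Re F' > 0` on a convex set (mean value theorem along
segments). If `f(x + yJ) = f(x' + y'K)`, then `F(x + iy)` and `F(x' + iy')` agree up to
conjugation; as `F z̄ = conj (F z)` and `y, y' ≥ 0`, this forces `x + iy = x' + iy'`, and then
`J = K` unless `y = 0`.
-/

open Metric Set Complex ComplexConjugate Quaternion

theorem Convex.injOn_of_hasDerivAt_of_re_pos {s : Set ℂ} (hs : Convex ℝ s) {f f' : ℂ → ℂ}
    (hf : ∀ z ∈ s, HasDerivAt f (f' z) z) (hpos : ∀ z ∈ s, 0 < (f' z).re) : InjOn f s := by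
  intro z hz w hw hzw
  by_contra hne
  set γ : ℝ → ℂ := fun t => t * (z - w) + w
  have hγ : ∀ t ∈ Icc (0 : ℝ) 1, γ t ∈ s := fun t ht => by
    simpa [γ, AffineMap.lineMap_apply_module', smul_eq_mul, mul_comm] using
      hs.lineMap_mem hw hz ht
  -- this derivative is `‖z - w‖² * re (f' (γ t)) > 0`, while `f z = f w` makes the slope zero
  have hderiv : ∀ t ∈ Icc (0 : ℝ) 1, HasDerivAt (fun t => (conj (z - w) * f (γ t)).re)
      ((conj (z - w) * (f' (γ t) * (z - w))).re) t := by
    intro t ht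
    have hγ' : HasDerivAt γ (z - w) t :=
      (((hasDerivAt_id t).ofReal_comp.mul_const (z - w)).add_const w).congr_deriv (by simp)
    exact reCLM.hasFDerivAt.comp_hasDerivAt t (((hf _ (hγ t ht)).comp t hγ').const_mul _)
  obtain ⟨c, hc, hslope⟩ := exists_hasDerivAt_eq_slope _ _ zero_lt_one
    (fun t ht => (hderiv t ht).continuousAt.continuousWithinAt)
    (fun t ht => hderiv t (Ioo_subset_Icc_self ht))
  have h0 : γ 0 = w := by simp [γ]
  have h1 : γ 1 = z := by simp [γ]
  rw [h0, h1, hzw, sub_self, zero_div, mul_left_comm, conj_mul',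
    ← ofReal_pow, re_mul_ofReal] at hslope
  have hdist : 0 < ‖z - w‖ := norm_pos_iff.2 (sub_ne_zero.2 hne)
  exact (mul_pos (hpos _ (hγ c (Ioo_subset_Icc_self hc))) (by positivity)).ne' hslope

section PowerSeries

variable {a : ℕ → ℂ} {r : ℝ} {z : ℂ}

theorem norm_natCast_mul_pow_mul_le (hz : ‖z‖ ≤ r) (n : ℕ) :
    ‖(n : ℂ) * z ^ (n - 1) * a n‖ ≤ n * r ^ (n - 1) * ‖a n‖ := by
  rw [norm_mul, norm_mul, norm_pow, Complex.norm_natCast]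
  gcongr

theorem summable_natCast_mul_pow_mul (ha : Summable fun n : ℕ => n * r ^ (n - 1) * ‖a n‖)
    (hz : ‖z‖ ≤ r) : Summable fun n : ℕ => (n : ℂ) * z ^ (n - 1) * a n :=
  .of_norm_bounded ha (norm_natCast_mul_pow_mul_le hz)

theorem summable_zero_pow_mul : Summable fun n : ℕ => (0 : ℂ) ^ n * a n :=
  summable_of_ne_finset_zero (s := {0}) fun n hn => by
    simp [zero_pow (Finset.notMem_singleton.1 hn)]

theorem summable_pow_mul (ha : Summable fun n : ℕ => n * r ^ (n - 1) * ‖a n‖)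
    (hz : ‖z‖ < r) : Summable fun n : ℕ => z ^ n * a n :=
  summable_of_summable_hasDerivAt_of_isPreconnected ha isOpen_ball
    (convex_ball 0 r).isPreconnected (fun n y _ => (hasDerivAt_pow n y).mul_const (a n))
    (fun n _ hy => norm_natCast_mul_pow_mul_le (mem_ball_zero_iff.1 hy).le n)
    (mem_ball_self ((norm_nonneg z).trans_lt hz)) summable_zero_pow_mul (mem_ball_zero_iff.2 hz)

theorem hasDerivAt_tsum_pow_mul (ha : Summable fun n : ℕ => n * r ^ (n - 1) * ‖a n‖)
    (hz : ‖z‖ < r) :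
    HasDerivAt (fun z => ∑' n, z ^ n * a n) (∑' n : ℕ, n * z ^ (n - 1) * a n) z :=
  hasDerivAt_tsum_of_isPreconnected (g' := fun (n : ℕ) y => (n : ℂ) * y ^ (n - 1) * a n) ha
    isOpen_ball (convex_ball 0 r).isPreconnected (fun n y _ => (hasDerivAt_pow n y).mul_const (a n))
    (fun n _ hy => norm_natCast_mul_pow_mul_le (mem_ball_zero_iff.1 hy).le n)
    (mem_ball_self ((norm_nonneg z).trans_lt hz)) summable_zero_pow_mul (mem_ball_zero_iff.2 hz)

theorem injOn_tsum_pow_mul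
    (ha : ∀ r ∈ Ico (0 : ℝ) 1, Summable fun n : ℕ => n * r ^ (n - 1) * ‖a n‖)
    (hpos : ∀ z ∈ ball (0 : ℂ) 1, 0 < (∑' n : ℕ, n * z ^ (n - 1) * a n).re) :
    InjOn (fun z => ∑' n, z ^ n * a n) (ball 0 1) := by
  refine (convex_ball 0 1).injOn_of_hasDerivAt_of_re_pos (fun z hz => ?_) hpos
  obtain ⟨r, hzr, hr1⟩ := exists_between (mem_ball_zero_iff.1 hz)
  exact hasDerivAt_tsum_pow_mul (ha r ⟨(norm_nonneg z).trans hzr.le, hr1⟩) hzr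

theorem tsum_conj_pow_mul_ofReal (a : ℕ → ℝ) (z : ℂ) :
    ∑' n, conj z ^ n * a n = conj (∑' n, z ^ n * a n) := by
  simp [Complex.conj_tsum]

end PowerSeries

namespace Quaternion

variable {J K : ℍ}

theorem norm_eq_one_of_mul_self_eq_neg_one (hJ : J * J = -1) : ‖J‖ = 1 := by
  have h : ‖J‖ * ‖J‖ = 1 := by rw [← norm_mul, hJ, norm_neg, norm_one]
  nlinarith [norm_nonneg J]

theorem re_eq_zero_of_mul_self_eq_neg_one (hJ : J * J = -1) : J.re = 0 := by
  rw [← sq_eq_neg_normSq, normSq_eq_norm_mul_self, norm_eq_one_of_mul_self_eq_neg_one hJ, sq, hJ]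
  simp

@[simp]
theorem re_liftAux (hJ : J * J = -1) (z : ℂ) : (liftAux J hJ z).re = z.re := by
  simp [re_eq_zero_of_mul_self_eq_neg_one hJ]

@[simp]
theorem liftAux_ofReal (hJ : J * J = -1) (r : ℝ) : liftAux J hJ r = (r : ℍ) := by
  simp

theorem star_liftAux (hJ : J * J = -1) (z : ℂ) :
    star (liftAux J hJ z) = liftAux J hJ (conj z) := by
  simp [star_eq_neg.2 (re_eq_zero_of_mul_self_eq_neg_one hJ)]

theorem normSq_liftAux (hJ : J * J = -1) (z : ℂ) :
    normSq (liftAux J hJ z) = Complex.normSq z := by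
  have h := congr_arg QuaternionAlgebra.re (self_mul_star (liftAux J hJ z))
  rwa [star_liftAux, ← map_mul, mul_conj, re_liftAux, ofReal_re, re_coe, eq_comm] at h

theorem norm_liftAux (hJ : J * J = -1) (z : ℂ) : ‖liftAux J hJ z‖ = ‖z‖ := by
  have h := normSq_liftAux hJ z
  rw [normSq_eq_norm_mul_self, Complex.normSq_eq_norm_sq, sq] at h
  exact (mul_self_inj (norm_nonneg _) (norm_nonneg _)).1 h

theorem continuous_liftAux (hJ : J * J = -1) : Continuous (liftAux J hJ) :=
  (liftAux J hJ).toLinearMap.continuous_of_finiteDimensional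

theorem exists_liftAux_eq {I : ℍ} (hI : I * I = -1) (q : ℍ) :
    ∃ (J : ℍ) (hJ : J * J = -1) (z : ℂ), 0 ≤ z.im ∧ liftAux J hJ z = q := by
  by_cases him : q.im = 0
  · refine ⟨I, hI, q.re, by simp, ?_⟩
    simpa [him] using re_add_im q
  · have hn : ‖q.im‖ ≠ 0 := norm_ne_zero_iff.2 him
    have hJ : (‖q.im‖⁻¹ • q.im) * (‖q.im‖⁻¹ • q.im) = -1 := by
      rw [smul_mul_smul_comm, ← sq q.im, im_sq, normSq_eq_norm_mul_self, smul_neg, ← coe_smul,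
        smul_eq_mul, mul_mul_mul_comm, inv_mul_cancel₀ hn, one_mul, coe_one]
    refine ⟨_, hJ, ⟨q.re, ‖q.im‖⟩, norm_nonneg _, ?_⟩
    simp [smul_smul, hn]

theorem liftAux_eq_liftAux_iff (hJ : J * J = -1) (hK : K * K = -1) (z : ℂ) :
    liftAux J hJ z = liftAux K hK z ↔ z.im = 0 ∨ J = K := by
  simp [← sub_eq_zero (a := z.im • J), ← smul_sub, sub_eq_zero]

theorem eq_or_eq_conj_of_liftAux_eq_liftAux (hJ : J * J = -1) (hK : K * K = -1) {u v : ℂ}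
    (h : liftAux J hJ u = liftAux K hK v) : u = v ∨ u = conj v := by
  have hre : u.re = v.re := by simpa only [re_liftAux] using congr_arg QuaternionAlgebra.re h
  have him : u.im ^ 2 = v.im ^ 2 := by
    have hn := congr_arg (‖·‖ ^ 2) h
    simp only [norm_liftAux, Complex.sq_norm, Complex.normSq_apply, hre] at hn
    linear_combination hn
  rcases sq_eq_sq_iff_eq_or_eq_neg.1 him with h' | h'
  · exact .inl (Complex.ext hre h')
  · exact .inr (Complex.ext (by simpa using hre) (by simpa using h'))


theorem liftAux_eq_liftAux_of_apply_eq {F : ℂ → ℂ} {s : Set ℂ} (hinj : InjOn F s)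
    (hconj : ∀ z, F (conj z) = conj (F z)) (hs : ∀ z ∈ s, conj z ∈ s)
    (hJ : J * J = -1) (hK : K * K = -1) {z w : ℂ} (hz : z ∈ s) (hw : w ∈ s)
    (hz₀ : 0 ≤ z.im) (hw₀ : 0 ≤ w.im) (h : liftAux J hJ (F z) = liftAux K hK (F w)) :
    liftAux J hJ z = liftAux K hK w := by
  obtain rfl : z = w := by
    rcases eq_or_eq_conj_of_liftAux_eq_liftAux hJ hK h with h' | h'
    · exact hinj hz hw h'
    · have hzw : z = conj w := hinj hz (hs w hw) (by rw [h', hconj])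
      have hw' : w.im = 0 := by
        have := congr_arg Complex.im hzw
        rw [conj_im] at this
        linarith
      rwa [conj_eq_iff_im.2 hw'] at hzw
  refine (liftAux_eq_liftAux_iff hJ hK z).2 ?_
  refine ((liftAux_eq_liftAux_iff hJ hK (F z)).1 h).imp_left fun hFz => ?_
  exact conj_eq_iff_im.1 (hinj (hs z hz) hz (by rw [hconj, conj_eq_iff_im.2 hFz]))

section RealCoefficients

variable {a : ℕ → ℝ}

theorem summable_natCast_mul_pow_mul_norm
    (h : ∀ q : ℍ, ‖q‖ < 1 → Summable fun n : ℕ => (n : ℝ) • (q ^ (n - 1) * (a n : ℍ))) :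
    ∀ r ∈ Ico (0 : ℝ) 1, Summable fun n : ℕ => n * r ^ (n - 1) * ‖(a n : ℂ)‖ := by
  intro r ⟨hr₀, hr₁⟩
  have hr := h r (by simpa [abs_of_nonneg hr₀] using hr₁)
  simp only [← coe_pow, ← coe_mul, ← coe_smul, summable_coe] at hr
  -- a summable real series is absolutely summable
  simpa [abs_mul, abs_of_nonneg hr₀, mul_assoc] using hr.abs

theorem tsum_liftAux_pow_mul
    (ha : ∀ r ∈ Ico (0 : ℝ) 1, Summable fun n : ℕ => n * r ^ (n - 1) * ‖(a n : ℂ)‖)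
    (hJ : J * J = -1) {z : ℂ} (hz : z ∈ ball 0 1) :
    ∑' n, liftAux J hJ z ^ n * (a n : ℍ) = liftAux J hJ (∑' n, z ^ n * a n) := by
  obtain ⟨r, hzr, hr₁⟩ := exists_between (mem_ball_zero_iff.1 hz)
  have h := summable_pow_mul (ha r ⟨(norm_nonneg z).trans hzr.le, hr₁⟩) hzr
  refine Eq.trans (tsum_congr fun n => ?_) (h.hasSum.map _ (continuous_liftAux hJ)).tsum_eq
  simp only [Function.comp_apply, map_mul, map_pow, liftAux_ofReal]

theorem tsum_liftAux_natCast_mul_pow_mul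
    (ha : ∀ r ∈ Ico (0 : ℝ) 1, Summable fun n : ℕ => n * r ^ (n - 1) * ‖(a n : ℂ)‖)
    (hJ : J * J = -1) {z : ℂ} (hz : z ∈ ball 0 1) :
    ∑' n : ℕ, (n : ℝ) • (liftAux J hJ z ^ (n - 1) * (a n : ℍ)) =
      liftAux J hJ (∑' n : ℕ, n * z ^ (n - 1) * a n) := by
  have h := summable_natCast_mul_pow_mul (ha ‖z‖ ⟨norm_nonneg z, mem_ball_zero_iff.1 hz⟩) le_rfl
  refine Eq.trans (tsum_congr fun n => ?_) (h.hasSum.map _ (continuous_liftAux hJ)).tsum_eq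
  simp only [Function.comp_apply, map_mul, map_pow, map_natCast, liftAux_ofReal,
    Nat.cast_smul_eq_nsmul, nsmul_eq_mul, mul_assoc]

end RealCoefficients

end Quaternion

theorem stmt4_general (a : ℕ → ℝ)
    (hconv' : ∀ q : Quaternion ℝ, ‖q‖ < 1 →
      Summable (fun n : ℕ => (n : ℝ) • (q ^ (n - 1) * ((a n : ℝ) : Quaternion ℝ))))
    (I : Quaternion ℝ) (hI : I ^ 2 = -1)
    (hpos : ∀ q : Quaternion ℝ, ‖q‖ < 1 → (∃ x y : ℝ, q = (x : Quaternion ℝ) + y • I) →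
      0 < (∑' n : ℕ, (n : ℝ) • (q ^ (n - 1) * ((a n : ℝ) : Quaternion ℝ))).re) :
    (∀ q : Quaternion ℝ, ‖q‖ < 1 →
      0 < (∑' n : ℕ, (n : ℝ) • (q ^ (n - 1) * ((a n : ℝ) : Quaternion ℝ))).re) ∧
    Set.InjOn (fun q : Quaternion ℝ => ∑' n : ℕ, q ^ n * ((a n : ℝ) : Quaternion ℝ))
      (Metric.ball (0 : Quaternion ℝ) 1) := by
  have hI' : I * I = -1 := by rwa [← sq]
  have ha := summable_natCast_mul_pow_mul_norm hconv'
  have hposC : ∀ z ∈ ball (0 : ℂ) 1, 0 < (∑' n : ℕ, n * z ^ (n - 1) * (a n : ℂ)).re := by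
    intro z hz
    have := hpos (liftAux I hI' z) (by rwa [norm_liftAux, ← mem_ball_zero_iff])
      ⟨z.re, z.im, by simp⟩
    rwa [tsum_liftAux_natCast_mul_pow_mul ha hI' hz, re_liftAux] at this
  refine ⟨fun q hq => ?_, fun p hp q hq hpq => ?_⟩
  · obtain ⟨J, hJ, z, -, rfl⟩ := exists_liftAux_eq hI' q
    rw [norm_liftAux, ← mem_ball_zero_iff] at hq
    rw [tsum_liftAux_natCast_mul_pow_mul ha hJ hq, re_liftAux]
    exact hposC z hq
  · obtain ⟨J, hJ, z, hz₀, rfl⟩ := exists_liftAux_eq hI' p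
    obtain ⟨K, hK, w, hw₀, rfl⟩ := exists_liftAux_eq hI' q
    rw [mem_ball_zero_iff, norm_liftAux, ← mem_ball_zero_iff] at hp hq
    refine liftAux_eq_liftAux_of_apply_eq (injOn_tsum_pow_mul ha hposC)
      (tsum_conj_pow_mul_ofReal a) (fun z hz => by simpa using hz) hJ hK hp hq hz₀ hw₀ ?_
    rwa [← tsum_liftAux_pow_mul ha hJ hp, ← tsum_liftAux_pow_mul ha hK hq]

/-- If a quaternionic power series with real coefficients converging on the unit ball has
`Re f' > 0` on one slice `B(0;1) ∩ ℂ_I`, then `Re f' > 0` on all of `B(0;1)` and `f` is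
injective on `B(0;1)`. -/
theorem stmt4 (a : ℕ → ℝ)
    (hconv : ∀ q : Quaternion ℝ, ‖q‖ < 1 →
      Summable (fun n : ℕ => q ^ n * ((a n : ℝ) : Quaternion ℝ)))
    (hconv' : ∀ q : Quaternion ℝ, ‖q‖ < 1 →
      Summable (fun n : ℕ => (n : ℝ) • (q ^ (n - 1) * ((a n : ℝ) : Quaternion ℝ))))
    (I : Quaternion ℝ) (hI : I ^ 2 = -1)
    (hpos : ∀ q : Quaternion ℝ, ‖q‖ < 1 → (∃ x y : ℝ, q = (x : Quaternion ℝ) + y • I) →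
      0 < (∑' n : ℕ, (n : ℝ) • (q ^ (n - 1) * ((a n : ℝ) : Quaternion ℝ))).re) :
    (∀ q : Quaternion ℝ, ‖q‖ < 1 →
      0 < (∑' n : ℕ, (n : ℝ) • (q ^ (n - 1) * ((a n : ℝ) : Quaternion ℝ))).re) ∧
    Set.InjOn (fun q : Quaternion ℝ => ∑' n : ℕ, q ^ n * ((a n : ℝ) : Quaternion ℝ))
      (Metric.ball (0 : Quaternion ℝ) 1) :=
  stmt4_general a hconv' I hI hpos
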